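/- arXiv:1504.04689 — 3 statements merged into one kernel-verified Lean document; each statement's English description precedes it below -/
import Mathlib

section
/- For a self-conjugate partition λ of n, define χ^{*λ}: S_n → ℂ by χ^{*λ}(σ) = ± i^{m(λ)} √(μ_1 ⋯ μ_r) if σ ∈ C^±_{h(λ)}, and 0 otherwise. Then χ^{*λ}(τστ^{-1}) = sgn(τ) χ^{*λ}(σ) for all σ, τ ∈ S_n. -/
open Equiv Finset Matrix
open scoped BigOperators Classical Kronecker

namespace Paper

/-- The `i`-th largest part (0-indexed) of a partition of `n` (0 if `i` exceeds the length). -/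
def partAt {n : ℕ} (l : n.Partition) (i : ℕ) : ℕ :=
  ((l.parts.sort (· ≤ ·)).reverse).getD i 0

/-- The `i`-th part (0-indexed) of the conjugate partition: the number of parts `> i`. -/
def conjPartAt {n : ℕ} (l : n.Partition) (i : ℕ) : ℕ :=
  (l.parts.filter (fun p => i < p)).card

/-- A partition is self-conjugate when it equals its conjugate. -/
def IsSelfConj {n : ℕ} (l : n.Partition) : Prop :=
  ∀ i, partAt l i = conjPartAt l i

/-- The rank of a partition: the length of the main diagonal of its Young diagram. -/
def rank {n : ℕ} (l : n.Partition) : ℕ :=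
  ((Finset.range n).filter (fun i => i < partAt l i)).card

/-- `m(λ) = (n - rank λ)/2`. -/
def mval {n : ℕ} (l : n.Partition) : ℕ := (n - rank l) / 2

/-- The list of diagonal hook lengths `2 λ_k - (2k+1)` (0-indexed `k`), in decreasing order. -/
def hookParts {n : ℕ} (l : n.Partition) : List ℕ :=
  (List.range (rank l)).map (fun k => 2 * partAt l k - (2 * k + 1))

/-- A partition is strict-odd if its parts are distinct and all odd. -/
def IsStrictOdd {n : ℕ} (l : n.Partition) : Prop :=
  l.parts.Nodup ∧ ∀ p ∈ l.parts, Odd p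

/-- The full cycle type of a permutation of `Fin n`, including fixed points as parts `1`. -/
def fullCycleType {n : ℕ} (σ : Equiv.Perm (Fin n)) : Multiset ℕ :=
  σ.cycleType + Multiset.replicate (n - σ.cycleType.sum) 1

/-- `σ` has cycle type `l`. -/
def HasType {n : ℕ} (σ : Equiv.Perm (Fin n)) (l : n.Partition) : Prop :=
  fullCycleType σ = l.parts

/-- Power sum polynomial `p_k` in `n` variables. -/
noncomputable def pSum (n k : ℕ) : MvPolynomial (Fin n) ℂ :=
  ∑ i : Fin n, MvPolynomial.X i ^ k

/-- Vandermonde product `∏_{i<j} (x_i - x_j)`. -/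
noncomputable def vdm (n : ℕ) : MvPolynomial (Fin n) ℂ :=
  ∏ i : Fin n, ∏ j ∈ Finset.Ioi i, (MvPolynomial.X i - MvPolynomial.X j)

/-- The irreducible character `χ^λ` of the symmetric group `S_n`, defined via the Frobenius
character formula: `χ^λ(σ)` is the coefficient of `x^{λ+δ}` in `(∏_{i<j}(x_i-x_j)) p_μ(x)`,
where `μ` is the cycle type of `σ`. -/
noncomputable def frobChar {n : ℕ} (l : n.Partition) (σ : Equiv.Perm (Fin n)) : ℂ :=
  MvPolynomial.coeff
    (Finsupp.equivFunOnFinite.symm (fun j : Fin n => partAt l j + (n - 1 - (j : ℕ))))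
    (vdm n * ((fullCycleType σ).map (pSum n)).prod)

/-- Consecutive blocks of given lengths, starting at a given offset. -/
def blocksAux : List ℕ → ℕ → List (List ℕ)
  | [], _ => []
  | (k :: t), o => ((List.range k).map (o + ·)) :: blocksAux t (o + k)

/-- The canonical permutation of `Fin n` with cycle lengths given by the list `L`:
each cycle is formed by a consecutive block of indices. -/
def permOfList (n : ℕ) (L : List ℕ) : Equiv.Perm (Fin n) :=
  ((blocksAux L 0).map
    (fun b => (b.filterMap (fun m => if h : m < n then some (⟨m, h⟩ : Fin n) else none)).formPerm)).prod

/-- Sort a multiset of naturals into a decreasing list. -/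
def sortDesc (s : Multiset ℕ) : List ℕ := (s.sort (· ≤ ·)).reverse

/-- The class `C^+_μ`-style conjugacy class of `σ` under even permutations. -/
def altClass {n : ℕ} (σ : Equiv.Perm (Fin n)) : Set (Equiv.Perm (Fin n)) :=
  {π | ∃ τ : Equiv.Perm (Fin n), Equiv.Perm.sign τ = 1 ∧ π = τ * σ * τ⁻¹}

/-- The twisted character `χ^{*λ}` attached to a self-conjugate partition `λ`:
it vanishes off the conjugacy class of cycle type `h(λ)`, and on `σ = τ σ_μ τ⁻¹`
(with `σ_μ` the canonical permutation of type `μ = h(λ)`) it takes the value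
`sgn(τ) i^{m(λ)} √(μ_1 ⋯ μ_r)`. -/
noncomputable def twChar {n : ℕ} (l : n.Partition) (σ : Equiv.Perm (Fin n)) : ℂ :=
  if h : ∃ τ : Equiv.Perm (Fin n), σ = τ * permOfList n (hookParts l) * τ⁻¹ then
    ((Equiv.Perm.sign h.choose : ℤ) : ℂ) * Complex.I ^ mval l *
      ((Real.sqrt ((hookParts l).prod) : ℝ) : ℂ)
  else 0

variable {R : Type*} [Ring R] [Algebra ℂ R]

/-- Row immanant `Σ_τ χ(τ) a_{1τ(1)} ⋯ a_{nτ(n)}` (ordered product). -/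
noncomputable def rowImm {k : ℕ} (χ : Equiv.Perm (Fin k) → ℂ)
    (A : Matrix (Fin k) (Fin k) R) : R :=
  ∑ τ : Equiv.Perm (Fin k), χ τ • (List.ofFn (fun i => A i (τ i))).prod

/-- Column immanant `Σ_σ χ(σ⁻¹) a_{σ(1)1} ⋯ a_{σ(n)n}` (ordered product). -/
noncomputable def colImm {k : ℕ} (χ : Equiv.Perm (Fin k) → ℂ)
    (A : Matrix (Fin k) (Fin k) R) : R :=
  ∑ σ : Equiv.Perm (Fin k), χ σ⁻¹ • (List.ofFn (fun i => A (σ i) i)).prod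

/-- `imm_k A = (1/k!) Σ_{I} imm A_{II}`. -/
noncomputable def immSum {k : ℕ} {ι : Type*} [Fintype ι] (χ : Equiv.Perm (Fin k) → ℂ)
    (A : Matrix ι ι R) : R :=
  ((Nat.factorial k : ℂ))⁻¹ • ∑ I : Fin k → ι, rowImm χ (A.submatrix I I)

/-- The entries of a matrix pairwise commute. -/
def PairwiseCommute {ι κ : Type*} (A : Matrix ι κ R) : Prop :=
  ∀ i j k l, Commute (A i j) (A k l)

/-- The entries of a matrix pairwise anticommute. -/
def PairwiseAnticommute {ι κ : Type*} (A : Matrix ι κ R) : Prop :=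
  ∀ i j k l, A i j * A k l = - (A k l * A i j)

/-- Complete homogeneous symmetric polynomial `h_k` evaluated at `x : Fin N → ℂ`. -/
noncomputable def hfun (N k : ℕ) (x : Fin N → ℂ) : ℂ :=
  ∑ m : Sym (Fin N) k, ((m : Multiset (Fin N)).map x).prod

/-- The Schur polynomial `s_λ` evaluated at `x`, via the Jacobi–Trudi formula. -/
noncomputable def schur {n N : ℕ} (l : n.Partition) (x : Fin N → ℂ) : ℂ :=
  Matrix.det (Matrix.of fun i j : Fin n =>
    if (i : ℕ) ≤ partAt l i + (j : ℕ) then hfun N (partAt l i + (j : ℕ) - (i : ℕ)) x else 0)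

/-- The self-conjugate hook partition `(k+1, 1^k)` of `2k+1`. -/
def hookPartition (k : ℕ) : Nat.Partition (2 * k + 1) where
  parts := (k + 1) ::ₘ Multiset.replicate k 1
  parts_pos := by
    intro p hp
    rcases Multiset.mem_cons.mp hp with h | h
    · omega
    · have := Multiset.eq_of_mem_replicate h
      omega
  parts_sum := by
    simp [Multiset.sum_replicate]
    omega

end Paper
set_option linter.unusedSectionVars false

section AuxCentralizer


variable {α : Type*} [Fintype α] [DecidableEq α]

lemma list_prod_apply_fixed (ps : List (Perm α)) (x : α) (h : ∀ p ∈ ps, p x = x) :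
    ps.prod x = x := by
  induction ps with
  | nil => simp
  | cons q t ih =>
    rw [List.prod_cons, Perm.mul_apply, ih (fun p hp => h p (List.mem_cons_of_mem _ hp)),
      h q (List.mem_cons_self)]

lemma list_prod_apply_of_mem_support (F : Perm α → Perm α)
    (hF : ∀ c, (F c).support ⊆ c.support) :
    ∀ (cs : List (Perm α)), cs.Pairwise Perm.Disjoint → ∀ {x : α} {c₀ : Perm α}, c₀ ∈ cs →
      x ∈ c₀.support → (cs.map F).prod x = F c₀ x := by
  intro cs
  induction cs with
  | nil => intro _ x c₀ h; simp at h
  | cons q t ih =>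
    intro hd x c₀ hc₀ hx
    rw [List.map_cons, List.prod_cons, Perm.mul_apply]
    have hqd : ∀ c ∈ t, Perm.Disjoint q c := (List.pairwise_cons.mp hd).1
    by_cases hq : c₀ = q
    · subst hq
      rw [list_prod_apply_fixed]
      intro p hp
      obtain ⟨c, hc, rfl⟩ := List.mem_map.mp hp
      have hcx : c x = x := ((hqd c hc) x).resolve_left (Perm.mem_support.mp hx)
      exact Perm.notMem_support.mp (fun hmem => (Perm.mem_support.mp (hF c hmem)) hcx)
    · have hc₀t : c₀ ∈ t := by
        rcases List.mem_cons.mp hc₀ with h | h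
        · exact absurd h hq
        · exact h
      rw [ih (List.Pairwise.of_cons hd) hc₀t hx]
      have hqc : Perm.Disjoint q c₀ := hqd c₀ hc₀t
      have key : ∀ y, y ∈ c₀.support → F q y = y := by
        intro y hy
        have : q y = y := ((hqc y).resolve_right (Perm.mem_support.mp hy))
        exact Perm.notMem_support.mp (fun hmem => (Perm.mem_support.mp (hF q hmem)) this)
      by_cases hfx : F c₀ x = x
      · rw [hfx]; exact key x hx
      · exact key _ (hF c₀ (Perm.apply_mem_support.mpr (Perm.mem_support.mpr hfx)))

lemma sign_eq_one_of_commute {n : ℕ} (g z : Perm (Fin n))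
    (h1 : g.cycleType.Nodup) (h2 : ∀ p ∈ g.cycleType, Odd p)
    (h3 : n ≤ g.support.card + 1) (hz : Commute z g) : Perm.sign z = 1 := by
  classical
  have hfix : ∀ c ∈ g.cycleFactorsFinset, z * c * z⁻¹ = c := by
    intro c hc
    have hmem : z * c * z⁻¹ ∈ g.cycleFactorsFinset := by
      rw [Perm.mem_cycleFactorsFinset_iff] at hc ⊢
      refine ⟨hc.1.conj, ?_⟩
      intro y hy
      rw [Perm.support_conj, Finset.mem_map] at hy
      obtain ⟨x, hx, rfl⟩ := hy
      have hx' := hc.2 x hx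
      simp only [Perm.mul_apply, Equiv.toEmbedding_apply, Perm.inv_def, Equiv.symm_apply_apply]
      rw [hx', ← Perm.mul_apply, hz.eq, Perm.mul_apply]
    have hcard : (z * c * z⁻¹).support.card = c.support.card := by
      rw [Perm.support_conj, Finset.card_map]
    rw [Perm.cycleType_def] at h1
    exact Multiset.inj_on_of_nodup_map h1 _ hmem _ hc hcard
  have hpow : ∀ c ∈ g.cycleFactorsFinset, ∃ k : ℤ, ∀ x ∈ c.support, z x = (c ^ k) x := by
    intro c hc
    have hcyc := (Perm.mem_cycleFactorsFinset_iff.mp hc).1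
    have hcom : Commute z c := by
      have h := hfix c hc
      have : z * c = c * z := by
        have := congrArg (· * z) h
        simpa [mul_assoc] using this
      exact this
    obtain ⟨hc', hz'⟩ := hcyc.commute_iff.mp hcom
    obtain ⟨k, hk⟩ := Subgroup.mem_zpowers_iff.mp hz'
    refine ⟨k, fun x hx => ?_⟩
    have h := Perm.congr_fun hk x
    rwa [Perm.ofSubtype_subtypePerm_of_mem hc' hx, eq_comm] at h
  set K : Perm (Fin n) → ℤ := fun c =>
    if h : ∃ k : ℤ, ∀ x ∈ c.support, z x = (c ^ k) x then h.choose else 0 with hK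
  have hKspec : ∀ c ∈ g.cycleFactorsFinset, ∀ x ∈ c.support, z x = (c ^ K c) x := by
    intro c hc
    have h := hpow c hc
    simp only [hK, dif_pos h]
    exact h.choose_spec
  set cs := g.cycleFactorsFinset.toList with hcs
  have hnd : cs.Pairwise Perm.Disjoint := by
    have := g.cycleFactorsFinset_pairwise_disjoint
    exact Finset.nodup_toList _ |>.pairwise_of_forall_ne
      (fun a ha b hb hab => this (Finset.mem_toList.mp ha) (Finset.mem_toList.mp hb) hab)
  have hzw : z = (cs.map (fun c => c ^ K c)).prod := by
    refine Equiv.ext fun x => ?_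
    by_cases hx : x ∈ g.support
    · have hc0 : g.cycleOf x ∈ g.cycleFactorsFinset :=
        Perm.cycleOf_mem_cycleFactorsFinset_iff.mpr hx
      have hx0 : x ∈ (g.cycleOf x).support := by
        rw [Perm.mem_support_cycleOf_iff]
        exact ⟨Perm.SameCycle.refl _ _, hx⟩
      rw [list_prod_apply_of_mem_support _ (fun c => Perm.support_zpow_le c (K c)) cs hnd
        (Finset.mem_toList.mpr hc0) hx0]
      exact hKspec _ hc0 x hx0
    · have hzg : g (z x) = z x := by
        have h1x : g x = x := Perm.notMem_support.mp hx
        have := Perm.congr_fun hz.eq x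
        simp only [Perm.mul_apply, h1x] at this
        exact this.symm
      have hzx : z x = x := by
        by_contra hne
        have hzxm : z x ∈ g.supportᶜ := by
          simp [Perm.notMem_support.mpr hzg]
        have hxm : x ∈ g.supportᶜ := by simpa using hx
        have h2le : 2 ≤ g.supportᶜ.card := Finset.one_lt_card.mpr ⟨_, hzxm, _, hxm, hne⟩
        have : g.supportᶜ.card = n - g.support.card := by
          rw [Finset.card_compl]
          simp
        omega
      rw [hzx]
      symm
      apply list_prod_apply_fixed
      intro p hp
      obtain ⟨c, hc, rfl⟩ := List.mem_map.mp hp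
      have hsub : c.support ⊆ g.support :=
        Perm.mem_cycleFactorsFinset_support_le (Finset.mem_toList.mp hc)
      apply Perm.notMem_support.mp
      intro hmem
      exact hx (hsub (Perm.support_zpow_le c (K c) hmem))
  rw [hzw, map_list_prod]
  apply List.prod_eq_one
  intro s hs
  rw [List.map_map, List.mem_map] at hs
  obtain ⟨c, hc, rfl⟩ := hs
  have hcf := Finset.mem_toList.mp hc
  have hcyc := (Perm.mem_cycleFactorsFinset_iff.mp hcf).1
  have hodd : Odd c.support.card := by
    apply h2
    rw [Perm.cycleType_def]
    exact Multiset.mem_map_of_mem _ hcf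
  have hsign : Perm.sign c = 1 := by
    rw [hcyc.sign, hodd.neg_one_pow]
    simp
  simp only [Function.comp_apply, _root_.map_zpow, hsign, _root_.one_zpow]

end AuxCentralizer

namespace Paper

variable {n : ℕ} (l : n.Partition)


lemma parts_card_le : Multiset.card l.parts ≤ n := by
  have h1 := Multiset.card_nsmul_le_sum (s := l.parts) (a := 1)
    (fun x hx => l.parts_pos hx)
  rw [l.parts_sum] at h1
  simpa using h1

lemma partAt_antitone {i j : ℕ} (hij : i ≤ j) : partAt l j ≤ partAt l i := by
  unfold partAt
  by_cases hj : j < (l.parts.sort (· ≤ ·)).reverse.length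
  · have hi : i < (l.parts.sort (· ≤ ·)).reverse.length := lt_of_le_of_lt hij hj
    rw [List.getD_eq_get _ _ ⟨j, hj⟩, List.getD_eq_get _ _ ⟨i, hi⟩]
    have hsort := Multiset.pairwise_sort l.parts (· ≤ ·)
    have hj' := hj
    have hi' := hi
    simp only [List.length_reverse] at hj' hi'
    rw [List.get_reverse' _ _ (by simp only [List.length_reverse] at hj' hi' ⊢; omega),
      List.get_reverse' _ _ (by simp only [List.length_reverse] at hj' hi' ⊢; omega)]
    apply hsort.rel_get_of_le
    simp only [Fin.mk_le_mk, List.length_reverse]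
    omega
  · rw [List.getD_eq_default _ _ (by omega)]
    exact Nat.zero_le _
lemma partAt_eq_zero {i : ℕ} (hi : n ≤ i) : partAt l i = 0 := by
  unfold partAt
  apply List.getD_eq_default
  have := parts_card_le l
  simp only [List.length_reverse, Multiset.length_sort]
  omega

lemma lt_rank_iff {k : ℕ} : k < rank l ↔ k < partAt l k := by
  constructor
  · intro hk
    by_contra hnk
    push_neg at hnk
    have hsub : (Finset.range n).filter (fun i => i < partAt l i) ⊆ Finset.range k := by
      intro j hj
      simp only [Finset.mem_filter, Finset.mem_range] at hj ⊢
      by_contra hjk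
      push_neg at hjk
      have := partAt_antitone l hjk
      omega
    have := Finset.card_le_card hsub
    rw [Finset.card_range] at this
    unfold rank at hk
    omega
  · intro hk
    have hkn : k < n := by
      by_contra hn
      push_neg at hn
      rw [partAt_eq_zero l hn] at hk
      omega
    have hsub : Finset.range (k + 1) ⊆ (Finset.range n).filter (fun i => i < partAt l i) := by
      intro j hj
      simp only [Finset.mem_range] at hj
      simp only [Finset.mem_filter, Finset.mem_range]
      have h1 := partAt_antitone l (show j ≤ k by omega)
      exact ⟨by omega, by omega⟩
    have := Finset.card_le_card hsub
    rw [Finset.card_range] at this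
    unfold rank
    omega

lemma rank_le : rank l ≤ n := by
  unfold rank
  have := Finset.card_filter_le (Finset.range n) (fun i => i < partAt l i)
  rwa [Finset.card_range] at this

lemma partAt_rank_lt {k : ℕ} (hk : k < rank l) : k < partAt l k := (lt_rank_iff l).mp hk

lemma partAt_le_rank {i : ℕ} (hi : rank l ≤ i) : partAt l i ≤ rank l := by
  by_contra h
  push_neg at h
  have h2 : partAt l i ≤ partAt l (rank l) := partAt_antitone l hi
  have h3 : rank l < partAt l (rank l) := by omega
  have := (lt_rank_iff l).mpr h3
  omega

-- sum over range of getD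
lemma sum_getD_map (f : ℕ → ℕ) (hf : f 0 = 0) :
    ∀ (s : List ℕ) (m : ℕ), s.length ≤ m →
      ∑ i ∈ Finset.range m, f (s.getD i 0) = (s.map f).sum := by
  intro s
  induction s with
  | nil => intro m _; simp [hf]
  | cons a t ih =>
    intro m hm
    simp only [List.length_cons] at hm
    obtain ⟨m', rfl⟩ : ∃ m', m = m' + 1 := ⟨m - 1, by omega⟩
    rw [Finset.sum_range_succ']
    simp only [List.getD_cons_succ, List.getD_cons_zero, List.map_cons, List.sum_cons]
    rw [ih m' (by omega)]
    omega

lemma sum_partAt_map (f : ℕ → ℕ) (hf : f 0 = 0) (m : ℕ) (hm : n ≤ m) :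
    ∑ i ∈ Finset.range m, f (partAt l i) = (l.parts.map f).sum := by
  unfold partAt
  rw [sum_getD_map f hf _ m (by
    simp only [List.length_reverse, Multiset.length_sort]
    exact le_trans (parts_card_le l) hm)]
  have : ((l.parts.sort (· ≤ ·)).reverse : Multiset ℕ) = l.parts := by
    rw [Multiset.coe_reverse, Multiset.sort_eq]
  calc ((l.parts.sort (· ≤ ·)).reverse.map f).sum
      = (((l.parts.sort (· ≤ ·)).reverse : Multiset ℕ).map f).sum := by
        rw [Multiset.map_coe, Multiset.sum_coe]
    _ = (l.parts.map f).sum := by rw [this]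

lemma sum_partAt : ∑ i ∈ Finset.range n, partAt l i = n := by
  have := sum_partAt_map l id rfl n le_rfl
  simpa [l.parts_sum] using this

lemma sum_conjPartAt (r : ℕ) :
    ∑ i ∈ Finset.Ico r n, conjPartAt l i = (l.parts.map (fun p => p - r)).sum := by
  unfold conjPartAt
  have hle : ∀ p ∈ l.parts, p ≤ n := by
    intro p hp
    conv_rhs => rw [← l.parts_sum]
    exact Multiset.le_sum_of_mem hp
  revert hle
  refine Multiset.induction_on l.parts ?_ ?_
  · simp
  · intro a s ih hle
    have ha : a ≤ n := hle a (Multiset.mem_cons_self _ _)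
    have ihs := ih (fun p hp => hle p (Multiset.mem_cons_of_mem hp))
    simp only [Multiset.filter_cons, Multiset.map_cons, Multiset.sum_cons]
    simp only [Multiset.card_add]
    rw [Finset.sum_add_distrib, ihs]
    have : ∑ i ∈ Finset.Ico r n, Multiset.card (if i < a then {a} else 0) = a - r := by
      have h1 : ∀ i, Multiset.card (if i < a then ({a} : Multiset ℕ) else 0)
          = if i < a then 1 else 0 := by
        intro i
        split <;> simp
      simp only [h1]
      have h2 : (Finset.Ico r n).filter (fun i => i < a) = Finset.Ico r (min a n) := by
        ext x
        simp only [Finset.mem_filter, Finset.mem_Ico, lt_min_iff]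
        omega
      rw [← Finset.card_filter, h2, Nat.card_Ico]
      omega
    omega


lemma partAt_ge_rank_of_lt {k : ℕ} (hk : k < rank l) : rank l ≤ partAt l k := by
  have h1 : rank l - 1 < partAt l (rank l - 1) := partAt_rank_lt l (by omega)
  have h2 := partAt_antitone l (show k ≤ rank l - 1 by omega)
  omega

lemma list_range_map_sum (f : ℕ → ℕ) (r : ℕ) :
    ((List.range r).map f).sum = ∑ k ∈ Finset.range r, f k := by
  induction r with
  | zero => simp
  | succ r ih => rw [List.range_succ, List.map_append, List.sum_append, Finset.sum_range_succ, ih]; simp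

lemma sum_odds (r : ℕ) : ∑ k ∈ Finset.range r, (2 * k + 1) = r * r := by
  induction r with
  | zero => simp
  | succ r ih => rw [Finset.sum_range_succ, ih]; ring

lemma sum_partAt_range_rank (hl : IsSelfConj l) :
    n + rank l * rank l = 2 * ∑ k ∈ Finset.range (rank l), partAt l k := by
  have hrn := rank_le l
  set r := rank l with hr
  have hsplit : ∑ i ∈ Finset.range n, partAt l i
      = (∑ i ∈ Finset.range r, partAt l i) + ∑ i ∈ Finset.Ico r n, partAt l i := by
    rw [Finset.range_eq_Ico, ← Finset.sum_Ico_consecutive _ (Nat.zero_le r) hrn,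
      ← Finset.range_eq_Ico]
  have hB : ∑ i ∈ Finset.Ico r n, partAt l i = (l.parts.map (fun p => p - r)).sum := by
    rw [Finset.sum_congr rfl (fun i _ => hl i), sum_conjPartAt]
  have hC : (l.parts.map (fun p => p - r)).sum = ∑ i ∈ Finset.range n, (partAt l i - r) :=
    (sum_partAt_map l (fun p => p - r) (by simp) n le_rfl).symm
  have hD : ∑ i ∈ Finset.range n, (partAt l i - r)
      = ∑ i ∈ Finset.range r, (partAt l i - r) := by
    rw [Finset.range_eq_Ico, ← Finset.sum_Ico_consecutive _ (Nat.zero_le r) hrn,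
      ← Finset.range_eq_Ico]
    have hz : ∑ i ∈ Finset.Ico r n, (partAt l i - r) = 0 :=
      Finset.sum_eq_zero (fun i hi => by
        have := partAt_le_rank l (Finset.mem_Ico.mp hi).1
        omega)
    omega
  have hge : ∀ i ∈ Finset.range r, r ≤ partAt l i := fun i hi =>
    partAt_ge_rank_of_lt l (Finset.mem_range.mp hi)
  have hsum2 : ∑ i ∈ Finset.range r, (partAt l i - r) + r * r
      = ∑ i ∈ Finset.range r, partAt l i := by
    have h1 : ∑ i ∈ Finset.range r, (partAt l i - r) + ∑ _i ∈ Finset.range r, r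
        = ∑ i ∈ Finset.range r, partAt l i := by
      rw [← Finset.sum_add_distrib]
      exact Finset.sum_congr rfl (fun i hi => by have := hge i hi; omega)
    simpa [Finset.sum_const, Finset.card_range, mul_comm] using h1
  have hP := sum_partAt l
  omega

lemma hookParts_sum (hl : IsSelfConj l) : (hookParts l).sum = n := by
  have hmain := sum_partAt_range_rank l hl
  unfold hookParts
  rw [list_range_map_sum]
  have hterm : ∑ k ∈ Finset.range (rank l), (2 * partAt l k - (2 * k + 1))
      + ∑ k ∈ Finset.range (rank l), (2 * k + 1)
      = ∑ k ∈ Finset.range (rank l), 2 * partAt l k := by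
    rw [← Finset.sum_add_distrib]
    refine Finset.sum_congr rfl (fun k hk => ?_)
    have := partAt_rank_lt l (Finset.mem_range.mp hk)
    omega
  rw [sum_odds] at hterm
  rw [← Finset.mul_sum] at hterm
  omega

lemma hookParts_strictAnti {j k : ℕ} (hjk : j < k) (hk : k < rank l) :
    2 * partAt l k - (2 * k + 1) < 2 * partAt l j - (2 * j + 1) := by
  have h1 := partAt_antitone l (le_of_lt hjk)
  have h2 := partAt_rank_lt l hk
  have h3 := partAt_rank_lt l (lt_trans hjk hk)
  omega

lemma hookParts_nodup : (hookParts l).Nodup := by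
  unfold hookParts
  apply List.Nodup.map_on ?_ List.nodup_range
  intro x hx y hy hxy
  rw [List.mem_range] at hx hy
  by_contra hne
  rcases Nat.lt_or_ge x y with h | h
  · have := hookParts_strictAnti l h hy
    omega
  · have := hookParts_strictAnti l (by omega : y < x) hx
    omega

lemma hookParts_odd : ∀ p ∈ hookParts l, Odd p := by
  intro p hp
  unfold hookParts at hp
  rw [List.mem_map] at hp
  obtain ⟨k, hk, rfl⟩ := hp
  rw [List.mem_range] at hk
  have := partAt_rank_lt l hk
  exact ⟨partAt l k - (k + 1), by omega⟩

lemma hookParts_pos : ∀ p ∈ hookParts l, 1 ≤ p := by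
  intro p hp
  obtain ⟨m, hm⟩ := hookParts_odd l p hp
  omega


lemma filterMap_toFin_map_val {n : ℕ} : ∀ (b : List ℕ), (∀ m ∈ b, m < n) →
    (b.filterMap (fun m => if h : m < n then some (⟨m, h⟩ : Fin n) else none)).map Fin.val = b := by
  intro b
  induction b with
  | nil => simp
  | cons a t ih =>
    intro h
    rw [List.filterMap_cons]
    have ha : a < n := h a (List.mem_cons_self)
    rw [dif_pos ha]
    simpa using ih (fun m hm => h m (List.mem_cons_of_mem _ hm))

def fpn (n : ℕ) (b : List ℕ) : Equiv.Perm (Fin n) :=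
  (b.filterMap (fun m => if h : m < n then some (⟨m, h⟩ : Fin n) else none)).formPerm

lemma permOfList_eq (n : ℕ) (L : List ℕ) :
    permOfList n L = ((blocksAux L 0).map (fpn n)).prod := rfl

lemma blocks_spec (n : ℕ) : ∀ (L : List ℕ) (o : ℕ), o + L.sum ≤ n →
    (∀ x : Fin n, (((blocksAux L o).map (fpn n)).prod) x ≠ x → o ≤ x.val) ∧
    (((blocksAux L o).map (fpn n)).prod).cycleType = ↑(L.filter (fun k => 2 ≤ k)) := by
  intro L
  induction L with
  | nil =>
    intro o ho
    constructor
    · intro x hx; simp [blocksAux] at hx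
    · simp [blocksAux]
  | cons k t ih =>
    intro o ho
    simp only [blocksAux, List.map_cons, List.prod_cons, fpn]
    have hbm : ∀ m ∈ (List.range k).map (o + ·), m < n := by
      intro m hm
      simp only [List.mem_map, List.mem_range] at hm
      obtain ⟨i, hi, rfl⟩ := hm
      simp only [List.sum_cons] at ho
      omega
    set b := (List.range k).map (o + ·) with hb
    set bl := b.filterMap (fun m => if h : m < n then some (⟨m, h⟩ : Fin n) else none) with hbl
    have hval : bl.map Fin.val = b := filterMap_toFin_map_val b hbm
    have hbnd : b.Nodup := List.Nodup.map (fun a b h => by omega) List.nodup_range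
    have hnd : bl.Nodup := List.Nodup.of_map Fin.val (hval ▸ hbnd)
    have hlen : bl.length = k := by
      have := congrArg List.length hval
      simpa [hb] using this
    have hmemlt : ∀ x : Fin n, x ∈ bl → o ≤ x.val ∧ x.val < o + k := by
      intro x hx
      have hxb : x.val ∈ b := hval ▸ List.mem_map_of_mem (f := Fin.val) hx
      simp only [hb, List.mem_map, List.mem_range] at hxb
      obtain ⟨i, hi, hxe⟩ := hxb
      omega
    have hsupp : ∀ x : Fin n, bl.formPerm x ≠ x → o ≤ x.val ∧ x.val < o + k := by
      intro x hx
      have := List.support_formPerm_le' bl hx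
      exact hmemlt x (by simpa using this)
    obtain ⟨ih1, ih2⟩ := ih (o + k) (by simp only [List.sum_cons] at ho; omega)
    set rest := ((blocksAux t (o + k)).map (fpn n)).prod with hrest
    have hdisj : Equiv.Perm.Disjoint bl.formPerm rest := by
      intro x
      by_cases h1 : bl.formPerm x = x
      · exact Or.inl h1
      · right
        by_contra h2
        have ha := hsupp x h1
        have hb := ih1 x h2
        omega
    refine ⟨?_, ?_⟩
    · intro x hx
      by_cases h1 : bl.formPerm x = x
      · have h2 : rest x ≠ x := by
          intro h
          apply hx
          rw [Equiv.Perm.mul_apply, h, h1]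
        have := ih1 x h2
        omega
      · exact (hsupp x h1).1
    · rw [Equiv.Perm.Disjoint.cycleType_mul hdisj, ih2]
      by_cases hk : 2 ≤ k
      · have hcyc : bl.formPerm.IsCycle := List.isCycle_formPerm hnd (hlen ▸ hk)
        rw [hcyc.cycleType]
        have hne : ∀ x : Fin n, bl ≠ [x] := by
          intro x hex
          rw [hex] at hlen
          simp at hlen
          omega
        have hcard : bl.formPerm.support.card = k := by
          rw [List.support_formPerm_of_nodup bl hnd hne, List.card_toFinset,
            List.Nodup.dedup hnd, hlen]
        rw [hcard, List.filter_cons, if_pos (by simpa using hk)]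
        simp
      · have h1 : bl.formPerm = 1 := by
          have hle : bl.length ≤ 1 := by omega
          rcases Nat.lt_or_ge bl.length 1 with h | h
          · have : bl = [] := List.length_eq_zero_iff.mp (by omega)
            rw [this, List.formPerm_nil]
          · have : bl.length = 1 := by omega
            obtain ⟨x, hx⟩ := List.length_eq_one_iff.mp this
            rw [hx, List.formPerm_singleton]
        rw [h1, Equiv.Perm.cycleType_one, List.filter_cons, if_neg (by simpa using hk), zero_add]

lemma permOfList_cycleType (n : ℕ) (L : List ℕ) (h : L.sum ≤ n) :
    (permOfList n L).cycleType = ↑(L.filter (fun k => 2 ≤ k)) := by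
  rw [permOfList_eq]
  exact (blocks_spec n L 0 (by simpa using h)).2

lemma sum_le_filter_sum_add_one : ∀ (L : List ℕ), L.Nodup → (∀ k ∈ L, 1 ≤ k) →
    L.sum ≤ (L.filter (fun k => 2 ≤ k)).sum + 1 := by
  intro L
  induction L with
  | nil => simp
  | cons a t ih =>
    intro hnd hpos
    rw [List.sum_cons, List.filter_cons]
    have hnd' := List.nodup_cons.mp hnd
    by_cases ha : 2 ≤ a
    · rw [if_pos (by simpa using ha), List.sum_cons]
      have := ih hnd'.2 (fun k hk => hpos k (List.mem_cons_of_mem _ hk))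
      omega
    · have ha1 : a = 1 := by have := hpos a (List.mem_cons_self); omega
      rw [if_neg (by simpa using ha)]
      have hteq : t.filter (fun k => 2 ≤ k) = t := by
        apply List.filter_eq_self.mpr
        intro k hk
        have h1 : 1 ≤ k := hpos k (List.mem_cons_of_mem _ hk)
        have h2 : k ≠ 1 := by
          intro h
          exact hnd'.1 (by rw [ha1, ← h]; exact hk)
        simpa using by omega
      rw [hteq]
      omega


end Paper

/-- The twisted character `χ^{*λ}` attached to a self-conjugate partition satisfies
`χ^{*λ}(τστ⁻¹) = sgn(τ) χ^{*λ}(σ)`. -/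
theorem twChar_twisted {n : ℕ} (l : n.Partition) (hl : Paper.IsSelfConj l)
    (σ τ : Equiv.Perm (Fin n)) :
    Paper.twChar l (τ * σ * τ⁻¹) = ((Equiv.Perm.sign τ : ℤ) : ℂ) * Paper.twChar l σ := by
  classical
  set π := Paper.permOfList n (Paper.hookParts l) with hπ
  have hsum : (Paper.hookParts l).sum = n := Paper.hookParts_sum l hl
  have hct : π.cycleType = ↑((Paper.hookParts l).filter (fun k => 2 ≤ k)) :=
    Paper.permOfList_cycleType n _ (le_of_eq hsum)
  have hnd : π.cycleType.Nodup := by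
    rw [hct]
    exact Multiset.coe_nodup.mpr ((Paper.hookParts_nodup l).filter _)
  have hodd : ∀ p ∈ π.cycleType, Odd p := by
    intro p hp
    rw [hct] at hp
    exact Paper.hookParts_odd l p (List.mem_of_mem_filter (by exact_mod_cast hp))
  have hcardsupp : n ≤ π.support.card + 1 := by
    have h1 : π.cycleType.sum = π.support.card := Equiv.Perm.sum_cycleType π
    rw [hct, Multiset.sum_coe] at h1
    have h2 := Paper.sum_le_filter_sum_add_one (Paper.hookParts l)
      (Paper.hookParts_nodup l) (Paper.hookParts_pos l)
    omega
  have hcent : ∀ z : Equiv.Perm (Fin n), Commute z π → Equiv.Perm.sign z = 1 :=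
    fun z hz => sign_eq_one_of_commute π z hnd hodd hcardsupp hz
  by_cases h : ∃ τ₁ : Equiv.Perm (Fin n), σ = τ₁ * π * τ₁⁻¹
  · have h' : ∃ τ₁ : Equiv.Perm (Fin n), τ * σ * τ⁻¹ = τ₁ * π * τ₁⁻¹ := by
      obtain ⟨b, hb⟩ := h
      exact ⟨τ * b, by rw [hb]; group⟩
    rw [Paper.twChar, dif_pos h', Paper.twChar, dif_pos h]
    have hae : τ * σ * τ⁻¹ = h'.choose * π * h'.choose⁻¹ := h'.choose_spec
    have hbe : σ = h.choose * π * h.choose⁻¹ := h.choose_spec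
    set a := h'.choose
    set b := h.choose
    have hconj : ((τ * b)⁻¹ * a) * π * ((τ * b)⁻¹ * a)⁻¹ = π := by
      have hE : a * π * a⁻¹ = (τ * b) * π * (τ * b)⁻¹ := by
        rw [← hae, hbe]; group
      calc ((τ * b)⁻¹ * a) * π * ((τ * b)⁻¹ * a)⁻¹
          = (τ * b)⁻¹ * (a * π * a⁻¹) * (τ * b) := by group
        _ = (τ * b)⁻¹ * ((τ * b) * π * (τ * b)⁻¹) * (τ * b) := by rw [hE]
        _ = π := by group
    have hcomm : Commute ((τ * b)⁻¹ * a) π := by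
      have h3 := congrArg (fun w => w * ((τ * b)⁻¹ * a)) hconj
      exact (by simpa only [inv_mul_cancel_right] using h3 : ((τ * b)⁻¹ * a) * π = π * ((τ * b)⁻¹ * a))
    have hsign1 := hcent _ hcomm
    have hsa : Equiv.Perm.sign a = Equiv.Perm.sign τ * Equiv.Perm.sign b := by
      rw [_root_.map_mul, _root_.map_inv, _root_.map_mul] at hsign1
      exact (inv_mul_eq_one.mp hsign1).symm
    rw [hsa]
    push_cast [Units.val_mul]
    ring
  · have h' : ¬ ∃ τ₁ : Equiv.Perm (Fin n), τ * σ * τ⁻¹ = τ₁ * π * τ₁⁻¹ := by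
      rintro ⟨a, ha⟩
      refine h ⟨τ⁻¹ * a, ?_⟩
      have hσ : σ = τ⁻¹ * (τ * σ * τ⁻¹) * τ := by group
      rw [hσ, ha]; group
    rw [Paper.twChar, dif_neg h', Paper.twChar, dif_neg h, mul_zero]
end

section
/- Let A be an n×n matrix whose entries pairwise anticommute (in particular each entry squares to zero), and σ ∈ S_n. Then the row immanant of the permuted matrix A^σ = (a_{σ(i)σ(j)}) equals sgn(σ) times the row immanant of A: row-imm^λ A^σ = sgn(σ) · row-imm^λ A. -/
open Equiv Finset Matrix
open scoped BigOperators Classical Kronecker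

section AuxAnticomm

variable {R : Type*} [Ring R] [Algebra ℂ R]

lemma sq_zero_of_anticomm {α : Type*} (a : α → R)
    (ha : ∀ x y, a x * a y = -(a y * a x)) (m : α →₀ ℂ) :
    (Finsupp.linearCombination ℂ a) m * (Finsupp.linearCombination ℂ a) m = 0 := by
  classical
  set S := (Finsupp.linearCombination ℂ a) m with hSdef
  have hS : S = ∑ x ∈ m.support, m x • a x := by
    rw [hSdef, Finsupp.linearCombination_apply, Finsupp.sum]
  have key : S * S = -(S * S) := by
    conv_lhs => rw [hS, Finset.sum_mul_sum, Finset.sum_comm]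
    conv_rhs => rw [hS, Finset.sum_mul_sum]
    rw [← Finset.sum_neg_distrib]
    refine Finset.sum_congr rfl fun y _ => ?_
    rw [← Finset.sum_neg_distrib]
    refine Finset.sum_congr rfl fun x _ => ?_
    rw [smul_mul_smul_comm, smul_mul_smul_comm, ha y x, mul_comm (m x) (m y), smul_neg, neg_neg]
  have h2 : S * S + S * S = 0 := by
    nth_rewrite 2 [key]; exact add_neg_cancel _
  calc S * S = (2⁻¹ : ℂ) • ((2 : ℂ) • (S * S)) := by rw [smul_smul]; norm_num
    _ = (2⁻¹ : ℂ) • (S * S + S * S) := by rw [two_smul]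
    _ = 0 := by rw [h2, smul_zero]

lemma prod_comp_perm {n : ℕ} (a : Fin n × Fin n → R)
    (ha : ∀ x y, a x * a y = -(a y * a x))
    (v : Fin n → Fin n × Fin n) (σ : Equiv.Perm (Fin n)) :
    (List.ofFn fun i => a (v (σ i))).prod
      = (((Equiv.Perm.sign σ : ℤ) : ℂ)) • (List.ofFn fun i => a (v i)).prod := by
  classical
  have cond : ∀ m, (Finsupp.linearCombination ℂ a) m * (Finsupp.linearCombination ℂ a) m = 0 :=
    sq_zero_of_anticomm a ha
  set φ : ExteriorAlgebra ℂ (Fin n × Fin n →₀ ℂ) →ₐ[ℂ] R :=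
    ExteriorAlgebra.lift ℂ ⟨Finsupp.linearCombination ℂ a, cond⟩ with hφdef
  have hφι : ∀ x, φ (ExteriorAlgebra.ι ℂ (Finsupp.single x 1)) = a x := by
    intro x
    rw [hφdef, ExteriorAlgebra.lift_ι_apply, Finsupp.linearCombination_single, one_smul]
  have hprod : ∀ w : Fin n → Fin n × Fin n,
      φ (ExteriorAlgebra.ιMulti ℂ n fun i => Finsupp.single (w i) 1)
        = (List.ofFn fun i => a (w i)).prod := by
    intro w
    rw [ExteriorAlgebra.ιMulti_apply, map_list_prod, List.map_ofFn]
    have : (⇑φ ∘ fun i => ExteriorAlgebra.ι ℂ (Finsupp.single (w i) (1 : ℂ))) = fun i => a (w i) :=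
      funext fun i => hφι (w i)
    rw [this]
  have hperm := AlternatingMap.map_perm (ExteriorAlgebra.ιMulti ℂ n)
      (fun i => Finsupp.single (v i) (1 : ℂ)) σ
  have h1 : (List.ofFn fun i => a (v (σ i))).prod
      = φ (Equiv.Perm.sign σ • ExteriorAlgebra.ιMulti ℂ n fun i => Finsupp.single (v i) 1) := by
    rw [← hperm]
    exact (hprod fun i => v (σ i)).symm
  rw [h1, Units.smul_def, map_zsmul, hprod, Int.cast_smul_eq_zsmul ℂ]

lemma frobChar_conj {n : ℕ} (l : n.Partition) (σ τ : Equiv.Perm (Fin n)) :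
    Paper.frobChar l (σ * τ * σ⁻¹) = Paper.frobChar l τ := by
  unfold Paper.frobChar Paper.fullCycleType
  rw [Equiv.Perm.cycleType_conj]

end AuxAnticomm

/-- For a matrix with anticommuting entries, permuting rows and columns simultaneously
multiplies the row immanant by the sign of the permutation. -/
theorem rowImm_perm_anticommute {R : Type*} [Ring R] [Algebra ℂ R] {n : ℕ}
    (A : Matrix (Fin n) (Fin n) R) (hA : Paper.PairwiseAnticommute A)
    (l : n.Partition) (σ : Equiv.Perm (Fin n)) :
    Paper.rowImm (Paper.frobChar l) (A.submatrix σ σ) =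
      (((Equiv.Perm.sign σ : ℤ) : ℂ)) • Paper.rowImm (Paper.frobChar l) A := by
  classical
  unfold Paper.rowImm
  rw [Finset.smul_sum]
  refine Fintype.sum_equiv (MulAut.conj σ).toEquiv _ _ fun τ => ?_
  have hχ : Paper.frobChar l ((MulAut.conj σ).toEquiv τ) = Paper.frobChar l τ :=
    frobChar_conj l σ τ
  have hp : (List.ofFn fun i => A.submatrix σ σ i (τ i)).prod
      = (((Equiv.Perm.sign σ : ℤ) : ℂ)) •
        (List.ofFn fun i => A i (((MulAut.conj σ).toEquiv τ) i)).prod := by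
    have h := prod_comp_perm (fun x : Fin n × Fin n => A x.1 x.2)
      (fun x y => hA x.1 x.2 y.1 y.2) (fun j => (j, (σ * τ * σ⁻¹) j)) σ
    have hfun : (fun i => A.submatrix σ σ i (τ i))
        = fun i => (fun x : Fin n × Fin n => A x.1 x.2)
            ((fun j => (j, (σ * τ * σ⁻¹) j)) (σ i)) := by
      funext i
      simp [Matrix.submatrix_apply, Equiv.Perm.mul_apply]
    rw [hfun]
    exact h
  rw [hp, hχ, smul_comm]
end

section
/- Let λ be a self-conjugate partition of n and A an n×n matrix whose entries pairwise commute. Then for any σ ∈ S_n, imm^{*λ} A^σ = sgn(σ) · imm^{*λ} A, where A^σ = (a_{σ(i)σ(j)}). Consequently imm^{*λ}_n A := (1/n!) Σ_{I ∈ [N]^n} imm^{*λ} A_{II} = 0 for n > 1 when A is an N×N matrix with commuting entries. -/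
open Equiv Finset Matrix
open scoped BigOperators Classical Kronecker

section Aux
open Paper List Finset Equiv Equiv.Perm

lemma aux_list_sum_getD {M : Type*} [AddCommMonoid M] (L : List M) :
    ∑ j ∈ Finset.range L.length, L.getD j 0 = L.sum := by
  induction L with
  | nil => simp
  | cons a t ih =>
    rw [List.length_cons, Finset.sum_range_succ']
    simp only [List.getD_cons_succ, List.getD_cons_zero, ih]
    rw [List.sum_cons, add_comm]

variable {n : ℕ} (l : n.Partition)

lemma aux_card_le_sum (s : Multiset ℕ) (h : ∀ x ∈ s, 1 ≤ x) : Multiset.card s ≤ s.sum := by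
  induction s using Multiset.induction_on with
  | empty => simp
  | cons a t ih =>
    simp only [Multiset.card_cons, Multiset.sum_cons]
    have h1 := h a (by simp)
    have h2 := ih (fun x hx => h x (by simp [hx]))
    omega

lemma aux_parts_length : (l.parts.sort (· ≤ ·)).reverse.length ≤ n := by
  rw [List.length_reverse, Multiset.length_sort]
  have := aux_card_le_sum l.parts (fun x hx => l.parts_pos hx)
  rw [l.parts_sum] at this
  exact this

lemma aux_partAt_anti {i j : ℕ} (hij : i ≤ j) : partAt l j ≤ partAt l i := by
  unfold Paper.partAt
  set L := (l.parts.sort (· ≤ ·)).reverse with hL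
  have hsort : L.Pairwise (fun a b => b ≤ a) := by
    rw [hL, List.pairwise_reverse]
    exact Multiset.pairwise_sort (s := l.parts) (r := (· ≤ ·))
  rcases lt_or_ge j L.length with hj | hj
  · have hi : i < L.length := lt_of_le_of_lt hij hj
    rw [List.getD_eq_getElem L 0 hj, List.getD_eq_getElem L 0 hi]
    rcases eq_or_lt_of_le hij with rfl | hlt
    · exact le_refl _
    · exact List.pairwise_iff_getElem.mp hsort i j hi hj hlt
  · rw [List.getD_eq_default L 0 hj]
    exact Nat.zero_le _

lemma aux_sum_parts {M : Type*} [AddCommMonoid M] (f : ℕ → M) (hf : f 0 = 0) :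
    ∑ j ∈ Finset.range n, f (partAt l j) = (l.parts.map f).sum := by
  set L := (l.parts.sort (· ≤ ·)).reverse with hL
  have hlen : L.length ≤ n := aux_parts_length l
  have key : ∀ j, f (partAt l j) = (L.map f).getD j 0 := by
    intro j
    rcases lt_or_ge j L.length with hj | hj
    · rw [show partAt l j = L.getD j 0 from rfl, List.getD_eq_getElem L 0 hj,
        List.getD_eq_getElem (L.map f) 0 (by simpa using hj)]
      simp
    · rw [show partAt l j = L.getD j 0 from rfl, List.getD_eq_default L 0 hj,
        List.getD_eq_default (L.map f) 0 (by simpa using hj), hf]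
  calc ∑ j ∈ Finset.range n, f (partAt l j) = ∑ j ∈ Finset.range n, (L.map f).getD j 0 := by
        exact Finset.sum_congr rfl fun j _ => key j
    _ = ∑ j ∈ Finset.range (L.map f).length, (L.map f).getD j 0 := by
        refine (Finset.sum_subset (Finset.range_subset_range.mpr (by simpa using hlen)) ?_).symm
        intro x _ hx
        rw [List.getD_eq_default _ 0 (by simpa using hx)]
    _ = (L.map f).sum := aux_list_sum_getD _
    _ = (l.parts.map f).sum := by
        rw [hL, List.map_reverse, List.sum_reverse]
        have : l.parts = ↑(l.parts.sort (· ≤ ·)) := (Multiset.sort_eq _ _).symm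
        conv_rhs => rw [this, Multiset.map_coe, Multiset.sum_coe]

lemma aux_sum_partAt : ∑ j ∈ Finset.range n, partAt l j = n := by
  have := aux_sum_parts l id rfl
  simpa using this.trans (by simp [l.parts_sum])

lemma aux_partAt_le : ∀ j, partAt l j ≤ n := by
  intro j
  set L := (l.parts.sort (· ≤ ·)).reverse with hL
  rcases lt_or_ge j L.length with hj | hj
  · have hmemL : ∀ y ∈ L, y ∈ l.parts := by
      intro y hy
      rw [hL, List.mem_reverse] at hy
      exact (Multiset.mem_sort _).mp hy
    have : L[j] ∈ l.parts := hmemL _ (List.getElem_mem hj)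
    have := Multiset.single_le_sum (fun x _ => Nat.zero_le x) _ this
    rw [l.parts_sum] at this
    rw [show partAt l j = L.getD j 0 from rfl, List.getD_eq_getElem L 0 hj]
    exact this
  · rw [show partAt l j = L.getD j 0 from rfl, List.getD_eq_default L 0 hj]
    exact Nat.zero_le _

lemma aux_card_filter_multiset (p : ℕ → Prop) [DecidablePred p] (s : Multiset ℕ) :
    Multiset.card (s.filter p) = (s.map (fun x => if p x then 1 else 0)).sum := by
  induction s using Multiset.induction_on with
  | empty => simp
  | cons a t ih => by_cases h : p a <;> simp [Multiset.filter_cons, h, ih, add_comm]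

lemma aux_conjPartAt_eq (k : ℕ) :
    conjPartAt l k = ∑ j ∈ Finset.range n, (if k < partAt l j then 1 else 0) := by
  unfold Paper.conjPartAt
  rw [aux_card_filter_multiset, ← aux_sum_parts l (fun p => if k < p then 1 else 0) (by simp)]

lemma aux_range_card_of_dc (S : Finset ℕ) (h : ∀ i ∈ S, ∀ j, j ≤ i → j ∈ S) :
    S = Finset.range S.card := by
  have hsub : Finset.range S.card ⊆ S := by
    intro k hk
    rw [Finset.mem_range] at hk
    by_contra hkS
    have hS : S ⊆ Finset.range k := by
      intro i hi
      rw [Finset.mem_range]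
      by_contra hik
      push_neg at hik
      exact hkS (h i hi k hik)
    have := Finset.card_le_card hS
    rw [Finset.card_range] at this
    omega
  exact (Finset.eq_of_subset_of_card_le hsub (by simp)).symm

lemma aux_rank_filter :
    (Finset.range n).filter (fun i => i < partAt l i) = Finset.range (rank l) := by
  have hdc : ∀ i ∈ (Finset.range n).filter (fun i => i < partAt l i),
      ∀ j, j ≤ i → j ∈ (Finset.range n).filter (fun i => i < partAt l i) := by
    intro i hi j hj
    rw [Finset.mem_filter, Finset.mem_range] at hi ⊢
    refine ⟨lt_of_le_of_lt hj hi.1, ?_⟩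
    calc j ≤ i := hj
      _ < partAt l i := hi.2
      _ ≤ partAt l j := aux_partAt_anti l hj
  have := aux_range_card_of_dc _ hdc
  rw [this]
  rfl

lemma aux_lt_partAt_of_lt_rank {k : ℕ} (hk : k < rank l) : k < partAt l k ∧ k < n := by
  have : k ∈ (Finset.range n).filter (fun i => i < partAt l i) := by
    rw [aux_rank_filter l]; exact Finset.mem_range.mpr hk
  rw [Finset.mem_filter, Finset.mem_range] at this
  exact ⟨this.2, this.1⟩

lemma aux_partAt_le_of_rank_le {k : ℕ} (hk : rank l ≤ k) : partAt l k ≤ k := by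
  rcases lt_or_ge k n with hkn | hkn
  · by_contra h
    push_neg at h
    have : k ∈ (Finset.range n).filter (fun i => i < partAt l i) :=
      Finset.mem_filter.mpr ⟨Finset.mem_range.mpr hkn, h⟩
    rw [aux_rank_filter l, Finset.mem_range] at this
    omega
  · exact le_trans (aux_partAt_le l k) hkn

lemma aux_hookParts_sum (hl : IsSelfConj l) : (hookParts l).sum = n := by
  set r := rank l with hr
  set lam := partAt l with hlam
  -- all parts in the first r rows are ≥ r
  have h1 : ∀ j, j < r → r ≤ lam j := by
    intro j hj
    have h2 := (aux_lt_partAt_of_lt_rank l (show r - 1 < r by omega)).1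
    calc r = (r - 1) + 1 := by omega
      _ ≤ lam (r - 1) := h2
      _ ≤ lam j := aux_partAt_anti l (by omega)
  have hrn : r ≤ n := by
    have := Finset.card_le_card (Finset.filter_subset (fun i => i < partAt l i) (Finset.range n))
    simpa [hr, Paper.rank] using this
  -- ★★ : ∑_{k ∈ Ico r n} lam k = ∑_{j ∈ range r} (lam j - r)
  have hstar : ∑ k ∈ Finset.Ico r n, lam k = ∑ j ∈ Finset.range r, (lam j - r) := by
    have e1 : ∀ k, lam k = conjPartAt l k := fun k => hl k
    calc ∑ k ∈ Finset.Ico r n, lam k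
        = ∑ k ∈ Finset.Ico r n, ∑ j ∈ Finset.range n, (if k < lam j then 1 else 0) := by
          refine Finset.sum_congr rfl fun k _ => ?_
          rw [e1 k, aux_conjPartAt_eq]
      _ = ∑ j ∈ Finset.range n, ∑ k ∈ Finset.Ico r n, (if k < lam j then 1 else 0) :=
          Finset.sum_comm
      _ = ∑ j ∈ Finset.range n, (lam j - r) := by
          refine Finset.sum_congr rfl fun j _ => ?_
          rw [← Finset.sum_filter]
          simp only [Finset.sum_const, smul_eq_mul, mul_one]
          have : Finset.filter (fun k => k < lam j) (Finset.Ico r n) =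
              Finset.Ico r (min n (lam j)) := by
            ext k
            simp only [Finset.mem_filter, Finset.mem_Ico, lt_min_iff]
            omega
          rw [this, Nat.card_Ico]
          have := aux_partAt_le l j
          rw [← hlam] at this
          omega
      _ = ∑ j ∈ Finset.range r, (lam j - r) := by
          rw [Finset.range_eq_Ico, ← Finset.sum_Ico_consecutive _ (Nat.zero_le r) hrn]
          have hz : ∑ j ∈ Finset.Ico r n, (lam j - r) = 0 := by
            apply Finset.sum_eq_zero
            intro j hj
            rw [Finset.mem_Ico] at hj
            have h3 : lam j ≤ lam r := aux_partAt_anti l hj.1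
            have h4 : lam r ≤ r := aux_partAt_le_of_rank_le l (le_refl r)
            omega
          rw [hz, add_zero, ← Finset.range_eq_Ico]
  -- basic decomposition
  have hsplit : ∑ j ∈ Finset.range r, lam j + ∑ k ∈ Finset.Ico r n, lam k = n := by
    rw [Finset.range_eq_Ico, Finset.sum_Ico_consecutive _ (Nat.zero_le r) hrn,
      ← Finset.range_eq_Ico]
    exact aux_sum_partAt l
  have h4 : ∑ j ∈ Finset.range r, lam j
      = ∑ j ∈ Finset.range r, (lam j - r) + r * r := by
    have : ∀ j ∈ Finset.range r, lam j = (lam j - r) + r := by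
      intro j hj
      rw [Finset.mem_range] at hj
      have := h1 j hj
      omega
    rw [Finset.sum_congr rfl this, Finset.sum_add_distrib, Finset.sum_const, Finset.card_range,
      smul_eq_mul]
  -- hook sum
  have h5 : (hookParts l).sum = ∑ k ∈ Finset.range r, (2 * lam k - (2 * k + 1)) := by
    rw [Paper.hookParts, ← hr, ← hlam]
    induction r with
    | zero => simp
    | succ m ih => rw [List.range_succ, List.map_append, List.sum_append,
        Finset.sum_range_succ, ih]; simp
  have h6 : (hookParts l).sum + ∑ k ∈ Finset.range r, (2 * k + 1)
      = 2 * ∑ k ∈ Finset.range r, lam k := by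
    rw [h5, ← Finset.sum_add_distrib, Finset.mul_sum]
    refine Finset.sum_congr rfl fun k hk => ?_
    rw [Finset.mem_range] at hk
    have := (aux_lt_partAt_of_lt_rank l hk).1
    rw [← hlam] at this
    omega
  have h7 : ∑ k ∈ Finset.range r, (2 * k + 1) = r * r := by
    clear_value r lam
    clear h1 hrn hstar hsplit h4 h5 h6 hr hlam
    induction r with
    | zero => simp
    | succ m ih => rw [Finset.sum_range_succ, ih]; ring
  -- combine
  set a := ∑ j ∈ Finset.range r, lam j
  set b := ∑ k ∈ Finset.Ico r n, lam k
  set c := ∑ j ∈ Finset.range r, (lam j - r)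
  set q := r * r
  omega

lemma aux_hookParts_odd (x : ℕ) (hx : x ∈ hookParts l) : Odd x := by
  rw [Paper.hookParts, List.mem_map] at hx
  obtain ⟨k, hk, rfl⟩ := hx
  rw [List.mem_range] at hk
  have := (aux_lt_partAt_of_lt_rank l hk).1
  exact ⟨partAt l k - (k + 1), by omega⟩

lemma aux_hookParts_pairwise : (hookParts l).Pairwise (· > ·) := by
  rw [Paper.hookParts, List.pairwise_map]
  rw [List.pairwise_iff_getElem]
  intro i j hi hj hij
  simp only [List.length_range] at hi hj
  rw [List.getElem_range, List.getElem_range]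
  have h1 := (aux_lt_partAt_of_lt_rank l hi).1
  have h2 := (aux_lt_partAt_of_lt_rank l hj).1
  have h3 : partAt l j ≤ partAt l i := aux_partAt_anti l (le_of_lt hij)
  omega

lemma aux_hookParts_nodup : (hookParts l).Nodup :=
  (aux_hookParts_pairwise l).imp (fun h => Nat.ne_of_gt h)

noncomputable def auxFb (n : ℕ) (b : List ℕ) : List (Fin n) :=
  b.filterMap (fun m => if h : m < n then some (⟨m, h⟩ : Fin n) else none)

noncomputable def auxP (n : ℕ) (L : List ℕ) (o : ℕ) : Equiv.Perm (Fin n) :=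
  ((Paper.blocksAux L o).map (fun b => (auxFb n b).formPerm)).prod

lemma aux_permOfList_eq (n : ℕ) (L : List ℕ) : Paper.permOfList n L = auxP n L 0 := rfl

lemma aux_fb_mem {n : ℕ} {b : List ℕ} {x : Fin n} : x ∈ auxFb n b ↔ (x : ℕ) ∈ b := by
  simp only [auxFb, List.mem_filterMap]
  constructor
  · rintro ⟨a, ha, hax⟩
    split_ifs at hax with h
    · cases Option.some.inj hax
      exact ha
  · intro h
    exact ⟨(x : ℕ), h, by simp [x.isLt]⟩

lemma aux_fb_len {n : ℕ} {b : List ℕ} (h : ∀ m ∈ b, m < n) :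
    (auxFb n b).length = b.length := by
  induction b with
  | nil => rfl
  | cons a t ih =>
    have ha : a < n := h a List.mem_cons_self
    rw [auxFb, List.filterMap_cons, dif_pos ha]
    simp only [List.length_cons]
    rw [← auxFb, ih (fun m hm => h m (List.mem_cons_of_mem a hm))]

lemma aux_fb_nodup {n : ℕ} {b : List ℕ} (h : b.Nodup) : (auxFb n b).Nodup := by
  refine List.Nodup.filterMap ?_ h
  intro a a' c hc hc'
  split_ifs at hc hc' with h1 h2
  · cases Option.some.inj hc
    cases Option.some.inj hc'
    rfl
  · simp at hc'
  · simp at hc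
  · simp at hc

lemma aux_formPerm_short {α : Type*} [DecidableEq α] (l : List α) (h : l.length ≤ 1) :
    l.formPerm = 1 := by
  cases l with
  | nil => exact List.formPerm_nil
  | cons a t =>
    cases t with
    | nil => exact List.formPerm_singleton a
    | cons b u => simp at h

lemma aux_blocks_spec (n : ℕ) : ∀ (L : List ℕ) (o : ℕ), o + L.sum ≤ n →
    (auxP n L o).cycleType = Multiset.filter (fun x => 2 ≤ x) (↑L : Multiset ℕ) ∧
    ∀ x : Fin n, (auxP n L o) x ≠ x → o ≤ (x : ℕ) ∧ (x : ℕ) < o + L.sum := by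
  intro L
  induction L with
  | nil =>
    intro o _
    constructor
    · simp [auxP, Paper.blocksAux]
    · intro x hx
      exact absurd rfl hx
  | cons k t ih =>
    intro o hsum
    rw [List.sum_cons] at hsum
    have hsum' : (o + k) + t.sum ≤ n := by omega
    obtain ⟨ih1, ih2⟩ := ih (o + k) hsum'
    set bk : List ℕ := (List.range k).map (o + ·) with hbk
    have hPeq : auxP n (k :: t) o = (auxFb n bk).formPerm * auxP n t (o + k) := rfl
    set σ := (auxFb n bk).formPerm with hσ
    set Q := auxP n t (o + k) with hQ
    have hmembk : ∀ m ∈ bk, o ≤ m ∧ m < o + k := by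
      intro m hm
      rw [hbk, List.mem_map] at hm
      obtain ⟨i, hi, rfl⟩ := hm
      rw [List.mem_range] at hi
      omega
    have hbklt : ∀ m ∈ bk, m < n := fun m hm => by have := hmembk m hm; omega
    have hbknd : bk.Nodup := by
      refine List.Nodup.map ?_ List.nodup_range
      intro a b hab
      dsimp only at hab
      omega
    have hfbnd : (auxFb n bk).Nodup := aux_fb_nodup hbknd
    have hfblen : (auxFb n bk).length = k := by rw [aux_fb_len hbklt, hbk]; simp
    have hσsupp : ∀ x : Fin n, σ x ≠ x → o ≤ (x : ℕ) ∧ (x : ℕ) < o + k := by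
      intro x hx
      have hx2 : x ∈ (auxFb n bk).toFinset := List.support_formPerm_le' _ hx
      rw [List.mem_toFinset, aux_fb_mem] at hx2
      exact hmembk _ hx2
    have hQsupp : ∀ x : Fin n, Q x ≠ x → o + k ≤ (x : ℕ) ∧ (x : ℕ) < o + k + t.sum := ih2
    have hdisj : σ.Disjoint Q := by
      intro x
      by_contra hc
      push_neg at hc
      have b1 := hσsupp x hc.1
      have b2 := hQsupp x hc.2
      omega
    have hct : (auxP n (k :: t) o).cycleType = σ.cycleType + Q.cycleType := by
      rw [hPeq]
      exact Equiv.Perm.Disjoint.cycleType_mul hdisj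
    constructor
    · rw [hct, ih1]
      by_cases hk2 : 2 ≤ k
      · have hcyc : σ.IsCycle := List.isCycle_formPerm hfbnd (by rw [hfblen]; exact hk2)
        have hsupp : σ.support = (auxFb n bk).toFinset := by
          refine List.support_formPerm_of_nodup _ hfbnd ?_
          intro x hx
          have := congrArg List.length hx
          rw [hfblen] at this
          simp at this
          omega
        have hcard : σ.support.card = k := by
          rw [hsupp, List.toFinset_card_of_nodup hfbnd, hfblen]
        rw [hcyc.cycleType, hcard]
        have hcc : (↑(k :: t) : Multiset ℕ) = k ::ₘ (↑t : Multiset ℕ) :=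
          (Multiset.cons_coe k t).symm
        rw [hcc, Multiset.filter_cons_of_pos _ (by simpa using hk2)]
        simp [Multiset.singleton_add]
      · have hσ1 : σ = 1 := aux_formPerm_short _ (by omega)
        rw [hσ1, Equiv.Perm.cycleType_one, zero_add, ← Multiset.cons_coe,
          Multiset.filter_cons_of_neg _ (by simpa using hk2)]
    · intro x hx
      rw [hPeq, Equiv.Perm.mul_apply] at hx
      have : σ x ≠ x ∨ Q x ≠ x := by
        by_contra hc
        push_neg at hc
        rw [hc.2, hc.1] at hx
        exact hx rfl
      rw [List.sum_cons]
      rcases this with h | h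
      · have := hσsupp x h
        omega
      · have := hQsupp x h
        omega


lemma aux_sign_fix (n : ℕ) (π : Equiv.Perm (Fin n))
    (hodd : ∀ x ∈ π.cycleType, Odd x)
    (hnodup : π.cycleType.Nodup)
    (hfix : n ≤ π.cycleType.sum + 1) :
    ∀ F : Finset (Equiv.Perm (Fin n)), F ⊆ π.cycleFactorsFinset →
      ∀ τ : Equiv.Perm (Fin n), Commute τ π →
        (∀ c ∈ π.cycleFactorsFinset, c ∉ F → ∀ x ∈ c.support, τ x = x) →
        Equiv.Perm.sign τ = 1 := by
  intro F
  induction F using Finset.induction_on with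
  | empty =>
    intro _ τ _ hfixes
    have hsupp : τ.support ⊆ Finset.univ \ π.support := by
      intro x hx
      rw [Finset.mem_sdiff]
      refine ⟨Finset.mem_univ x, fun hxπ => ?_⟩
      have hcf : π.cycleOf x ∈ π.cycleFactorsFinset :=
        Equiv.Perm.cycleOf_mem_cycleFactorsFinset_iff.mpr hxπ
      have hxc : x ∈ (π.cycleOf x).support :=
        Equiv.Perm.mem_support_cycleOf_iff.mpr ⟨Equiv.Perm.SameCycle.refl π x, hxπ⟩
      have := hfixes _ hcf (Finset.notMem_empty _) x hxc
      exact (Equiv.Perm.mem_support.mp hx) this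
    have hcard : τ.support.card ≤ 1 := by
      have h1 := Finset.card_le_card hsupp
      have h2 : (Finset.univ \ π.support).card = n - π.support.card := by
        rw [Finset.card_sdiff_of_subset (Finset.subset_univ _), Finset.card_univ, Fintype.card_fin]
      have h3 := π.sum_cycleType
      omega
    rw [Equiv.Perm.card_support_le_one.mp hcard, _root_.map_one]
  | @insert c F' hcF' ih =>
    intro hsub τ hcomm hfixes
    have hcf : c ∈ π.cycleFactorsFinset := hsub (Finset.mem_insert_self c F')
    have hsub' : F' ⊆ π.cycleFactorsFinset :=
      Finset.Subset.trans (Finset.subset_insert c F') hsub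
    have hccyc : c.IsCycle := (Equiv.Perm.mem_cycleFactorsFinset_iff.mp hcf).1
    have hπconj : τ * π * τ⁻¹ = π := by
      rw [hcomm.eq]; group
    have hconj : τ * c * τ⁻¹ = c := by
      have h2 : τ * c * τ⁻¹ ∈ π.cycleFactorsFinset := by
        have := (Equiv.Perm.mem_cycleFactorsFinset_conj π τ c).mpr hcf
        rwa [hπconj] at this
      have h3 : (τ * c * τ⁻¹).support.card = c.support.card :=
        Equiv.Perm.card_support_conj
      rw [Equiv.Perm.cycleType_def] at hnodup
      have h4 := Multiset.inj_on_of_nodup_map hnodup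
      exact h4 _ h2 _ hcf h3
    have hτc : Commute τ c := by
      have h := hconj
      rw [mul_inv_eq_iff_eq_mul] at h
      exact h
    obtain ⟨x₀, hx₀⟩ : ∃ x, x ∈ c.support := by
      have := hccyc.two_le_card_support
      have hpos : 0 < c.support.card := by omega
      obtain ⟨x, hx⟩ := Finset.card_pos.mp hpos
      exact ⟨x, hx⟩
    have hτx₀ : τ x₀ ∈ c.support := by
      have hmap : c.support.map τ.toEmbedding = c.support := by
        rw [← Equiv.Perm.support_conj, hconj]
      rw [← hmap]
      exact Finset.mem_map_of_mem _ hx₀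
    obtain ⟨k, hk⟩ : ∃ k : ℤ, (c ^ k) x₀ = τ x₀ :=
      hccyc.sameCycle (Equiv.Perm.mem_support.mp hx₀) (Equiv.Perm.mem_support.mp hτx₀)
    set τ' := (c ^ k)⁻¹ * τ with hτ'
    have hτeq : τ = (c ^ k) * τ' := by rw [hτ']; group
    have hcπ : Commute c π := by
      have hd := Equiv.Perm.disjoint_mul_inv_of_mem_cycleFactorsFinset hcf
      have h5 : Commute c (π * c⁻¹ * c) := (hd.commute.symm).mul_right (Commute.refl c)
      have h6 : π * c⁻¹ * c = π := by group
      rwa [h6] at h5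
    have hcomm' : Commute τ' π :=
      Commute.mul_left ((hcπ.zpow_left k).inv_left) hcomm
    have hτ'c : Commute τ' c :=
      Commute.mul_left (((Commute.refl c).zpow_left k).inv_left) hτc
    have hfix' : ∀ d ∈ π.cycleFactorsFinset, d ∉ F' → ∀ x ∈ d.support, τ' x = x := by
      intro d hd hdF' x hx
      by_cases hdc : d = c
      · subst hdc
        obtain ⟨j, hj⟩ : ∃ j : ℤ, (d ^ j) x₀ = x :=
          hccyc.sameCycle (Equiv.Perm.mem_support.mp hx₀) (Equiv.Perm.mem_support.mp hx)
        have h6 : τ' x₀ = x₀ := by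
          rw [hτ', Equiv.Perm.mul_apply, ← hk]
          simp
        have h7 : τ' ((d ^ j) x₀) = (d ^ j) (τ' x₀) := by
          have hcj := hτ'c.zpow_right j
          calc τ' ((d ^ j) x₀) = (τ' * d ^ j) x₀ := rfl
            _ = (d ^ j * τ') x₀ := by rw [hcj.eq]
            _ = (d ^ j) (τ' x₀) := rfl
        rw [← hj, h7, h6]
      · have h8 : τ x = x := by
          refine hfixes d hd ?_ x hx
          simp only [Finset.mem_insert, not_or]
          exact ⟨hdc, hdF'⟩
        have h9 : x ∉ c.support := by
          have hdisj : d.Disjoint c :=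
            (Equiv.Perm.cycleFactorsFinset_pairwise_disjoint π) hd hcf hdc
          rcases hdisj x with h | h
          · exact absurd h (Equiv.Perm.mem_support.mp hx)
          · exact Equiv.Perm.notMem_support.mpr h
        have h10 : (c ^ k) x = x := by
          have : x ∉ (c ^ k).support := fun hmem => h9 (Equiv.Perm.support_zpow_le c k hmem)
          exact Equiv.Perm.notMem_support.mp this
        have h11 : (c ^ k)⁻¹ x = x := by
          conv_lhs => rw [← h10]
          simp
        rw [hτ', Equiv.Perm.mul_apply, h8, h11]
    have hsign' := ih hsub' τ' hcomm' hfix'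
    have hsc : Equiv.Perm.sign c = 1 := by
      have hmem : c.support.card ∈ π.cycleType := by
        rw [Equiv.Perm.cycleType_def]
        exact Multiset.mem_map_of_mem _ hcf
      have hoddc := hodd _ hmem
      rw [hccyc.sign, hoddc.neg_one_pow, neg_neg]
    rw [hτeq, _root_.map_mul, hsign', map_zpow, hsc, _root_.one_zpow, mul_one]

lemma aux_sign_commute (n : ℕ) (π : Equiv.Perm (Fin n))
    (hodd : ∀ x ∈ π.cycleType, Odd x)
    (hnodup : π.cycleType.Nodup)
    (hfix : n ≤ π.cycleType.sum + 1)
    (τ : Equiv.Perm (Fin n)) (hcomm : Commute τ π) :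
    Equiv.Perm.sign τ = 1 :=
  aux_sign_fix n π hodd hnodup hfix π.cycleFactorsFinset (Finset.Subset.refl _) τ hcomm
    (fun c hc hcn _ _ => absurd hc hcn)


lemma aux_pi_facts (hl : IsSelfConj l) :
    (∀ x ∈ (Paper.permOfList n (hookParts l)).cycleType, Odd x) ∧
    (Paper.permOfList n (hookParts l)).cycleType.Nodup ∧
    n ≤ (Paper.permOfList n (hookParts l)).cycleType.sum + 1 := by
  have hsum := aux_hookParts_sum l hl
  have hct : (Paper.permOfList n (hookParts l)).cycleType
      = Multiset.filter (fun x => 2 ≤ x) (↑(hookParts l) : Multiset ℕ) := by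
    rw [aux_permOfList_eq]
    exact (aux_blocks_spec n (hookParts l) 0 (by omega)).1
  have hnd : (↑(hookParts l) : Multiset ℕ).Nodup :=
    (Multiset.coe_nodup).mpr (aux_hookParts_nodup l)
  refine ⟨?_, ?_, ?_⟩
  · intro x hx
    rw [hct, Multiset.mem_filter, Multiset.mem_coe] at hx
    exact aux_hookParts_odd l x hx.1
  · rw [hct]
    exact Multiset.Nodup.filter _ hnd
  · set sm : Multiset ℕ := (↑(hookParts l) : Multiset ℕ) with hsm
    have hsms : sm.sum = n := by rw [hsm, Multiset.sum_coe, hsum]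
    set t : Multiset ℕ := sm.filter (fun x => ¬ 2 ≤ x) with hts
    have hsplit : (sm.filter (fun x => 2 ≤ x)).sum + t.sum = n := by
      rw [← Multiset.sum_add, Multiset.filter_add_not, hsms]
    have ht1 : ∀ x ∈ t, x = 1 := by
      intro x hx
      rw [hts, Multiset.mem_filter] at hx
      obtain ⟨m, hm⟩ := aux_hookParts_odd l x (Multiset.mem_coe.mp hx.1)
      have := hx.2
      omega
    have htrep : t = Multiset.replicate (Multiset.card t) 1 :=
      (Multiset.eq_replicate_card).mpr ht1
    have htnd : t.Nodup := Multiset.Nodup.filter _ hnd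
    have hcard : Multiset.card t ≤ 1 := by
      have hcount := Multiset.nodup_iff_count_le_one.mp htnd 1
      rw [htrep, Multiset.count_replicate] at hcount
      simpa using hcount
    have htsum : t.sum ≤ 1 := by
      rw [htrep, Multiset.sum_replicate, smul_eq_mul, mul_one]
      exact hcard
    rw [hct]
    omega

lemma aux_W (hl : IsSelfConj l) (τ₁ τ₂ : Equiv.Perm (Fin n))
    (h : τ₁ * Paper.permOfList n (hookParts l) * τ₁⁻¹
       = τ₂ * Paper.permOfList n (hookParts l) * τ₂⁻¹) :
    Equiv.Perm.sign τ₁ = Equiv.Perm.sign τ₂ := by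
  obtain ⟨hodd, hnodup, hfix⟩ := aux_pi_facts l hl
  set π := Paper.permOfList n (hookParts l) with hπ
  have hcomm : Commute (τ₂⁻¹ * τ₁) π := by
    have h2 : (τ₂⁻¹ * τ₁) * π * (τ₂⁻¹ * τ₁)⁻¹ = π := by
      have h3 : τ₂⁻¹ * (τ₁ * π * τ₁⁻¹) * τ₂ = τ₂⁻¹ * (τ₂ * π * τ₂⁻¹) * τ₂ := by rw [h]
      have h4 : τ₂⁻¹ * (τ₂ * π * τ₂⁻¹) * τ₂ = π := by group
      rw [h4] at h3
      conv_rhs => rw [← h3]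
      group
    have := congrArg (fun z => z * (τ₂⁻¹ * τ₁)) h2
    show (τ₂⁻¹ * τ₁) * π = π * (τ₂⁻¹ * τ₁)
    simpa [mul_assoc] using this
  have hs := aux_sign_commute n π hodd hnodup hfix _ hcomm
  rw [_root_.map_mul, _root_.map_inv] at hs
  exact (inv_mul_eq_one.mp hs).symm

lemma aux_twChar_conj (hl : IsSelfConj l) (τ ρ : Equiv.Perm (Fin n)) :
    twChar l (τ * ρ * τ⁻¹)
      = (((Equiv.Perm.sign τ : ℤ) : ℂ)) * twChar l ρ := by
  set π := Paper.permOfList n (hookParts l) with hπ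
  by_cases h₂ : ∃ u : Equiv.Perm (Fin n), ρ = u * π * u⁻¹
  · have h₁ : ∃ u : Equiv.Perm (Fin n), τ * ρ * τ⁻¹ = u * π * u⁻¹ := by
      refine ⟨τ * h₂.choose, ?_⟩
      conv_lhs => rw [h₂.choose_spec]
      group
    rw [Paper.twChar, dif_pos h₁, Paper.twChar, dif_pos h₂]
    have hW : Equiv.Perm.sign h₁.choose
        = Equiv.Perm.sign τ * Equiv.Perm.sign h₂.choose := by
      have e1 := h₁.choose_spec
      have e2 := h₂.choose_spec
      have e3 : h₁.choose * π * h₁.choose⁻¹ = (τ * h₂.choose) * π * (τ * h₂.choose)⁻¹ := by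
        rw [← e1]
        conv_lhs => rw [e2]
        group
      rw [aux_W l hl _ _ e3, _root_.map_mul]
    rw [hW]
    push_cast
    ring
  · have h₁ : ¬ ∃ u : Equiv.Perm (Fin n), τ * ρ * τ⁻¹ = u * π * u⁻¹ := by
      rintro ⟨u, hu⟩
      refine h₂ ⟨τ⁻¹ * u, ?_⟩
      have : ρ = τ⁻¹ * (τ * ρ * τ⁻¹) * τ := by group
      rw [this, hu]
      group
    rw [Paper.twChar, dif_neg h₁, Paper.twChar, dif_neg h₂, mul_zero]

lemma aux_char (hl : IsSelfConj l) (σ ρ : Equiv.Perm (Fin n)) :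
    twChar l (σ⁻¹ * ρ * σ) = (((Equiv.Perm.sign σ : ℤ) : ℂ)) * twChar l ρ := by
  have h := aux_twChar_conj l hl σ⁻¹ ρ
  rw [inv_inv, Equiv.Perm.sign_inv] at h
  exact h


end Aux
/-- For commuting entries, the twisted immanant is alternating under simultaneous row/column
permutations; consequently `imm^{*λ}_n A = 0` for `n > 1`. -/
theorem twImm_perm_commute {R : Type*} [Ring R] [Algebra ℂ R] {n : ℕ}
    (l : n.Partition) (hl : Paper.IsSelfConj l) :
    (∀ (A : Matrix (Fin n) (Fin n) R), Paper.PairwiseCommute A →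
      ∀ σ : Equiv.Perm (Fin n),
        Paper.rowImm (Paper.twChar l) (A.submatrix σ σ) =
          (((Equiv.Perm.sign σ : ℤ) : ℂ)) • Paper.rowImm (Paper.twChar l) A) ∧
    (1 < n → ∀ (N : ℕ) (A : Matrix (Fin N) (Fin N) R), Paper.PairwiseCommute A →
      Paper.immSum (Paper.twChar l) A = 0) := by
  have part1 : ∀ (A : Matrix (Fin n) (Fin n) R), Paper.PairwiseCommute A →
      ∀ σ : Equiv.Perm (Fin n),
        Paper.rowImm (Paper.twChar l) (A.submatrix σ σ) =
          (((Equiv.Perm.sign σ : ℤ) : ℂ)) • Paper.rowImm (Paper.twChar l) A := by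
    intro A hA σ
    unfold Paper.rowImm
    calc (∑ τ : Equiv.Perm (Fin n),
            Paper.twChar l τ • (List.ofFn fun i => A.submatrix σ σ i (τ i)).prod)
        = ∑ ρ : Equiv.Perm (Fin n), Paper.twChar l (σ⁻¹ * ρ * σ) •
            (List.ofFn fun i => A.submatrix σ σ i ((σ⁻¹ * ρ * σ) i)).prod := by
          refine (Fintype.sum_equiv ((Equiv.mulLeft σ⁻¹).trans (Equiv.mulRight σ))
            _ _ fun ρ => ?_).symm
          rfl
      _ = ∑ ρ : Equiv.Perm (Fin n), (((Equiv.Perm.sign σ : ℤ) : ℂ) * Paper.twChar l ρ) •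
            (List.ofFn fun i => A i (ρ i)).prod := by
          refine Finset.sum_congr rfl fun ρ _ => ?_
          rw [aux_char l hl σ ρ]
          congr 1
          have hfun : (fun i => A.submatrix σ σ i ((σ⁻¹ * ρ * σ) i))
              = fun i => A (σ i) (ρ (σ i)) := by
            funext i
            simp [Matrix.submatrix_apply, Equiv.Perm.mul_apply]
          rw [hfun]
          have hperm : List.Perm (List.ofFn fun i => A (σ i) (ρ (σ i)))
              (List.ofFn (fun j => A j (ρ j))) :=
            σ.ofFn_comp_perm (fun j => A j (ρ j))
          have hpair : (List.ofFn fun i => A (σ i) (ρ (σ i))).Pairwise Commute := by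
            apply List.pairwise_of_forall_mem_list
            intro a ha b hb
            rw [List.mem_ofFn] at ha hb
            obtain ⟨i, rfl⟩ := ha
            obtain ⟨j, rfl⟩ := hb
            exact hA _ _ _ _
          exact hperm.prod_eq' hpair
      _ = ((Equiv.Perm.sign σ : ℤ) : ℂ) • ∑ ρ : Equiv.Perm (Fin n),
            Paper.twChar l ρ • (List.ofFn fun i => A i (ρ i)).prod := by
          rw [Finset.smul_sum]
          exact Finset.sum_congr rfl fun ρ _ => mul_smul _ _ _
  refine ⟨part1, ?_⟩
  intro hn N A hA
  unfold Paper.immSum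
  have hzero : (∑ I : Fin n → Fin N, Paper.rowImm (Paper.twChar l) (A.submatrix I I)) = 0 := by
    set a : Fin n := ⟨0, by omega⟩ with ha
    set b : Fin n := ⟨1, by omega⟩ with hb
    have hab : a ≠ b := by
      simp [ha, hb, Fin.ext_iff]
    set sw := Equiv.swap a b with hsw
    have hsign : Equiv.Perm.sign sw = -1 := Equiv.Perm.sign_swap hab
    set g : (Fin n → Fin N) → R := fun I => Paper.rowImm (Paper.twChar l) (A.submatrix I I)
      with hg
    have hswap : ∀ I : Fin n → Fin N, g (I ∘ sw) = - g I := by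
      intro I
      have hsubc : Paper.PairwiseCommute (A.submatrix I I) := fun i j k m => hA _ _ _ _
      have h1 := part1 (A.submatrix I I) hsubc sw
      rw [Matrix.submatrix_submatrix, hsign] at h1
      rw [hg]
      dsimp only
      rw [show (I ∘ sw) = fun i => I (sw i) from rfl] at *
      rw [h1]
      norm_num
    have hinv : Function.Involutive (fun I : Fin n → Fin N => I ∘ sw) := by
      intro I
      funext x
      simp [hsw, Function.comp]
    have hbij := hinv.bijective
    have hS : (∑ I : Fin n → Fin N, g I) = - ∑ I : Fin n → Fin N, g I := by
      conv_lhs => rw [← hbij.sum_comp g]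
      rw [← Finset.sum_neg_distrib]
      exact Finset.sum_congr rfl fun I _ => hswap I
    have h2 : (2 : ℂ) • (∑ I : Fin n → Fin N, g I) = 0 := by
      rw [two_smul]
      nth_rewrite 1 [hS]
      simp
    calc (∑ I : Fin n → Fin N, g I)
        = ((2 : ℂ)⁻¹ * 2) • (∑ I : Fin n → Fin N, g I) := by norm_num
      _ = (2 : ℂ)⁻¹ • ((2 : ℂ) • (∑ I : Fin n → Fin N, g I)) := by rw [mul_smul]
      _ = 0 := by rw [h2, smul_zero]
  rw [hzero, smul_zero]
end
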